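/- arXiv:2305.11384 — 2 statements merged into one kernel-verified Lean document; each statement's English description precedes it below -/
import Mathlib

section
/- For β ∈ (0, 1/2), setting γ̂_sc = 2β + 1/(2β), one has ∫_{-2}^{2} log(γ̂_sc - x) dν_sc(x) · (−1/2) + β·γ̂_sc − (1 + log(2β))/2 = β². -/
open MeasureTheory

/-!
Put `γ = u + 1/u` with `0 < u < 1`, so that `γ - x = (1 + u² - u x) / u`. The function
`G v = ∫ log (1 + v² - v x) dν_sc(x)` is differentiable on `|v| < 1` by dominated convergence,
and `G 0 = 0`. For `0 < v < 1` its derivative reduces, via the Stieltjes transform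
`∫ dν_sc(x) / (γ - x) = (γ - √(γ² - 4)) / 2`, to `v`. Hence `G u = u² / 2`, i.e.
`∫ log (γ - x) dν_sc(x) = u² / 2 - log u`; the theorem is the case `u = 2β`.
-/

open Real Set intervalIntegral

lemma four_sub_sq_pos {x : ℝ} (hx : x ∈ Ioo (-2 : ℝ) 2) : 0 < 4 - x ^ 2 := by
  obtain ⟨h₁, h₂⟩ := hx
  nlinarith

lemma hasDerivAt_arcsin_div_two {x : ℝ} (hx : x ∈ Ioo (-2 : ℝ) 2) :
    HasDerivAt (fun x => arcsin (x / 2)) (1 / √(4 - x ^ 2)) x := by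
  refine ((hasDerivAt_arcsin (x := x / 2) (by linarith [hx.1]) (by linarith [hx.2])).comp x
    ((hasDerivAt_id x).div_const 2)).congr_deriv ?_
  rw [show 1 - (x / 2) ^ 2 = (4 - x ^ 2) / 2 ^ 2 by ring, sqrt_div' _ (by positivity),
    sqrt_sq zero_le_two]
  field_simp

lemma hasDerivAt_sqrt_four_sub_sq {x : ℝ} (hx : x ∈ Ioo (-2 : ℝ) 2) :
    HasDerivAt (fun x => √(4 - x ^ 2)) (-x / √(4 - x ^ 2)) x := by
  convert ((hasDerivAt_pow 2 x).const_sub 4).sqrt (four_sub_sq_pos hx).ne' using 1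
  field_simp
  ring

lemma hasDerivAt_arcsin_moebius {γ x : ℝ} (hγ : 2 < γ) (hx : x ∈ Ioo (-2 : ℝ) 2) :
    HasDerivAt (fun x => arcsin ((4 - γ * x) / (2 * (γ - x))))
      (-√(γ ^ 2 - 4) / ((γ - x) * √(4 - x ^ 2))) x := by
  have hγx : 0 < γ - x := by linarith [hx.2]
  have hγ4 : 0 < γ ^ 2 - 4 := by nlinarith
  have h4x := four_sub_sq_pos hx
  set φ := (4 - γ * x) / (2 * (γ - x))
  have h1φ : 1 - φ ^ 2 = (γ ^ 2 - 4) * (4 - x ^ 2) / (2 * (γ - x)) ^ 2 := by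
    simp only [φ]; field_simp; ring
  have h1φpos : 0 < 1 - φ ^ 2 := by rw [h1φ]; positivity
  have hφ' : HasDerivAt (fun x => (4 - γ * x) / (2 * (γ - x)))
      (-(γ ^ 2 - 4) / (2 * (γ - x) ^ 2)) x := by
    refine ((((hasDerivAt_id x).const_mul γ).const_sub 4).div
      (((hasDerivAt_id x).const_sub γ).const_mul 2) (by positivity)).congr_deriv ?_
    simp only [id]
    field_simp
    ring
  refine ((hasDerivAt_arcsin (by nlinarith) (by nlinarith)).comp x hφ').congr_deriv ?_
  rw [h1φ, sqrt_div' _ (by positivity), sqrt_sq (by positivity), sqrt_mul hγ4.le]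
  have hcc := mul_self_sqrt hγ4.le
  field_simp
  linear_combination hcc

noncomputable def semicircleStieltjesPrimitive (γ x : ℝ) : ℝ :=
  γ * arcsin (x / 2) - √(4 - x ^ 2) + √(γ ^ 2 - 4) * arcsin ((4 - γ * x) / (2 * (γ - x)))

lemma hasDerivAt_semicircleStieltjesPrimitive {γ x : ℝ} (hγ : 2 < γ)
    (hx : x ∈ Ioo (-2 : ℝ) 2) :
    HasDerivAt (semicircleStieltjesPrimitive γ) (√(4 - x ^ 2) / (γ - x)) x := by
  refine (((hasDerivAt_arcsin_div_two hx).const_mul γ).sub (hasDerivAt_sqrt_four_sub_sq hx)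
    |>.add ((hasDerivAt_arcsin_moebius hγ hx).const_mul _)).congr_deriv ?_
  have hγx : 0 < γ - x := by linarith [hx.2]
  have hs := sqrt_pos.mpr (four_sub_sq_pos hx)
  field_simp
  rw [sq_sqrt (four_sub_sq_pos hx).le, sq_sqrt (by nlinarith)]
  ring

lemma continuousOn_semicircleStieltjesPrimitive {γ : ℝ} (hγ : 2 < γ) :
    ContinuousOn (semicircleStieltjesPrimitive γ) (Icc (-2) 2) := by
  have hden : ∀ x ∈ Icc (-2 : ℝ) 2, 2 * (γ - x) ≠ 0 := fun x hx => by nlinarith [hx.2]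
  unfold semicircleStieltjesPrimitive
  exact ((continuous_const.mul (continuous_arcsin.comp (continuous_id.div_const 2))).sub
    (by fun_prop)).continuousOn.add
    (continuousOn_const.mul
      (continuous_arcsin.comp_continuousOn (by fun_prop (disch := exact hden))))

lemma intervalIntegrable_sqrt_four_sub_sq_div_sub {γ : ℝ} (hγ : 2 < γ) :
    IntervalIntegrable (fun x => √(4 - x ^ 2) / (γ - x)) volume (-2) 2 := by
  refine ContinuousOn.intervalIntegrable (ContinuousOn.div (by fun_prop) (by fun_prop) ?_)
  intro x hx
  rw [uIcc_of_le (by norm_num)] at hx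
  linarith [hx.2]

theorem integral_sqrt_four_sub_sq_div_sub {γ : ℝ} (hγ : 2 < γ) :
    ∫ x in (-2 : ℝ)..2, √(4 - x ^ 2) / (γ - x) = π * (γ - √(γ ^ 2 - 4)) := by
  rw [integral_eq_sub_of_hasDeriv_right_of_le (by norm_num)
    (continuousOn_semicircleStieltjesPrimitive hγ)
    (fun x hx => (hasDerivAt_semicircleStieltjesPrimitive hγ hx).hasDerivWithinAt)
    (intervalIntegrable_sqrt_four_sub_sq_div_sub hγ)]
  have h₁ : (4 - γ * 2) / (2 * (γ - 2)) = -1 := by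
    field_simp [(by linarith : γ - 2 ≠ 0)]; ring
  have h₂ : (4 - γ * -2) / (2 * (γ - -2)) = 1 := by
    rw [div_eq_one_iff_eq (by linarith)]; ring
  simp only [semicircleStieltjesPrimitive, h₁, h₂, arcsin_one, arcsin_neg_one]
  norm_num [arcsin_one, arcsin_neg_one]
  ring

theorem integral_sqrt_four_sub_sq : ∫ x in (-2 : ℝ)..2, √(4 - x ^ 2) = 2 * π := by
  have h : ∀ x : ℝ, √(4 - (2 * x) ^ 2) = 2 * √(1 - x ^ 2) := fun x => by
    rw [show 4 - (2 * x) ^ 2 = 2 ^ 2 * (1 - x ^ 2) by ring, sqrt_mul (by positivity),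
      sqrt_sq zero_le_two]
  have := smul_integral_comp_mul_left (fun x => √(4 - x ^ 2)) 2 (a := -1) (b := 1)
  norm_num at this
  rw [← this]
  simp only [h, intervalIntegral.integral_const_mul, integral_sqrt_one_sub_sq]
  ring

noncomputable def semicircleDensity (x : ℝ) : ℝ := 1 / (2 * π) * √(4 - x ^ 2)

lemma semicircleDensity_nonneg (x : ℝ) : 0 ≤ semicircleDensity x := by
  unfold semicircleDensity; positivity

lemma continuous_semicircleDensity : Continuous semicircleDensity := by
  unfold semicircleDensity; fun_prop

theorem integral_semicircleDensity : ∫ x in (-2 : ℝ)..2, semicircleDensity x = 1 := by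
  simp only [semicircleDensity, intervalIntegral.integral_const_mul, integral_sqrt_four_sub_sq]
  field_simp

lemma sq_one_sub_abs_le_one_add_sq_sub_mul {v x : ℝ} (hx : x ∈ Icc (-2 : ℝ) 2) :
    (1 - |v|) ^ 2 ≤ 1 + v ^ 2 - v * x := by
  have : v * x ≤ 2 * |v| := by
    calc v * x ≤ |v * x| := le_abs_self _
      _ = |v| * |x| := abs_mul v x
      _ ≤ |v| * 2 := mul_le_mul_of_nonneg_left (abs_le.mpr hx) (abs_nonneg v)
      _ = 2 * |v| := mul_comm _ _
  nlinarith [sq_abs v]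

lemma one_add_sq_sub_mul_pos {v x : ℝ} (hv : |v| < 1) (hx : x ∈ Icc (-2 : ℝ) 2) :
    0 < 1 + v ^ 2 - v * x :=
  lt_of_lt_of_le (by nlinarith) (sq_one_sub_abs_le_one_add_sq_sub_mul hx)

lemma intervalIntegrable_log_one_add_sq_sub_mul {v : ℝ} (hv : |v| < 1) :
    IntervalIntegrable (fun x => log (1 + v ^ 2 - v * x) * semicircleDensity x) volume (-2) 2 := by
  refine (ContinuousOn.mul ?_ continuous_semicircleDensity.continuousOn).intervalIntegrable
  refine ContinuousOn.log (by fun_prop) fun x hx => (one_add_sq_sub_mul_pos hv ?_).ne'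
  rwa [uIcc_of_le (by norm_num)] at hx

noncomputable def semicircleLogIntegral (v : ℝ) : ℝ :=
  ∫ x in (-2 : ℝ)..2, log (1 + v ^ 2 - v * x) * semicircleDensity x

theorem hasDerivAt_semicircleLogIntegral {v₀ : ℝ} (hv₀ : |v₀| < 1) :
    HasDerivAt semicircleLogIntegral
      (∫ x in (-2 : ℝ)..2, (2 * v₀ - x) / (1 + v₀ ^ 2 - v₀ * x) * semicircleDensity x) v₀ := by
  set r := (1 + |v₀|) / 2
  have hr : r < 1 := by simp only [r]; linarith
  have hball : ∀ v ∈ Metric.ball v₀ ((1 - |v₀|) / 2), |v| ≤ r := fun v hv => by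
    have := abs_sub_abs_le_abs_sub v v₀
    rw [Metric.mem_ball, Real.dist_eq] at hv
    simp only [r]; linarith
  have hIcc : ∀ x ∈ uIoc (-2 : ℝ) 2, x ∈ Icc (-2 : ℝ) 2 := fun x hx => by
    rw [uIoc_of_le (by norm_num)] at hx
    exact Ioc_subset_Icc_self hx
  refine (intervalIntegral.hasDerivAt_integral_of_dominated_loc_of_deriv_le
    (F := fun v x => log (1 + v ^ 2 - v * x) * semicircleDensity x)
    (F' := fun v x => (2 * v - x) / (1 + v ^ 2 - v * x) * semicircleDensity x)
    (bound := fun x => 4 / (1 - r) ^ 2 * semicircleDensity x)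
    (Metric.ball_mem_nhds v₀ (by linarith : 0 < (1 - |v₀|) / 2))
    (Filter.Eventually.of_forall fun v => ?_)
    (intervalIntegrable_log_one_add_sq_sub_mul hv₀) ?_ ?_
    ((continuous_semicircleDensity.const_mul _).intervalIntegrable _ _) ?_).2
  · exact ((Measurable.log (by fun_prop)).mul
      continuous_semicircleDensity.measurable).aestronglyMeasurable
  · exact ((by fun_prop : Measurable fun x => (2 * v₀ - x) / (1 + v₀ ^ 2 - v₀ * x)).mul
      continuous_semicircleDensity.measurable).aestronglyMeasurable
  · filter_upwards with t ht v hv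
    obtain ⟨hvl, hvr⟩ := abs_le.mp (hball v hv)
    obtain ⟨htl, htr⟩ := hIcc t ht
    have hD : (1 - r) ^ 2 ≤ 1 + v ^ 2 - v * t :=
      (pow_le_pow_left₀ (by linarith) (by linarith [abs_le.mpr ⟨hvl, hvr⟩]) 2).trans
        (sq_one_sub_abs_le_one_add_sq_sub_mul ⟨htl, htr⟩)
    have hnum : |2 * v - t| ≤ 4 := abs_le.mpr ⟨by linarith, by linarith⟩
    rw [norm_mul, norm_div, Real.norm_eq_abs, Real.norm_eq_abs, Real.norm_eq_abs,
      abs_of_pos (lt_of_lt_of_le (by nlinarith) hD), abs_of_nonneg (semicircleDensity_nonneg t)]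
    gcongr
    exact semicircleDensity_nonneg t
  · filter_upwards with t ht v hv
    have hpos := one_add_sq_sub_mul_pos ((hball v hv).trans_lt hr) (hIcc t ht)
    refine (HasDerivAt.log (f := fun v => 1 + v ^ 2 - v * t) ?_ hpos.ne').mul_const _
    exact (((hasDerivAt_pow 2 v).const_add 1).sub ((hasDerivAt_id v).mul_const t)).congr_deriv
      (by ring)

lemma two_lt_add_inv {v : ℝ} (hv0 : 0 < v) (hv1 : v < 1) : 2 < v + 1 / v := by
  rw [← sub_pos, show v + 1 / v - 2 = (1 - v) ^ 2 / v by field_simp; ring]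
  exact div_pos (pow_pos (by linarith) 2) hv0

lemma integral_two_mul_sub_div_mul_semicircleDensity {v : ℝ} (hv0 : 0 < v) (hv1 : v < 1) :
    ∫ x in (-2 : ℝ)..2, (2 * v - x) / (1 + v ^ 2 - v * x) * semicircleDensity x = v := by
  have hγ := two_lt_add_inv hv0 hv1
  have hsplit : ∀ x ∈ uIcc (-2 : ℝ) 2, (2 * v - x) / (1 + v ^ 2 - v * x) * semicircleDensity x
      = 1 / v * semicircleDensity x
        + (v ^ 2 - 1) / (2 * π * v ^ 2) * (√(4 - x ^ 2) / (v + 1 / v - x)) := by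
    intro x hx
    rw [uIcc_of_le (by norm_num)] at hx
    have hD := (one_add_sq_sub_mul_pos (abs_lt.mpr ⟨by linarith, hv1⟩) hx).ne'
    rw [show v + 1 / v - x = (1 + v ^ 2 - v * x) / v by field_simp; ring]
    unfold semicircleDensity
    field_simp
    ring
  have hsqrt : √((v + 1 / v) ^ 2 - 4) = 1 / v - v := by
    rw [show (v + 1 / v) ^ 2 - 4 = (1 / v - v) ^ 2 by field_simp; ring, sqrt_sq]
    rw [sub_nonneg, le_div_iff₀ hv0]
    nlinarith
  rw [integral_congr hsplit, integral_add
    ((continuous_semicircleDensity.const_mul _).intervalIntegrable _ _)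
    ((intervalIntegrable_sqrt_four_sub_sq_div_sub hγ).const_mul _),
    intervalIntegral.integral_const_mul, intervalIntegral.integral_const_mul,
    integral_semicircleDensity, integral_sqrt_four_sub_sq_div_sub hγ, hsqrt]
  field_simp
  ring

theorem semicircleLogIntegral_eq {u : ℝ} (hu0 : 0 < u) (hu1 : u < 1) :
    semicircleLogIntegral u = u ^ 2 / 2 := by
  set I : ℝ → ℝ := fun v =>
    ∫ x in (-2 : ℝ)..2, (2 * v - x) / (1 + v ^ 2 - v * x) * semicircleDensity x
  have hderiv : ∀ v ∈ Icc 0 u,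
      HasDerivAt (fun v => semicircleLogIntegral v - v ^ 2 / 2) (I v - v) v := fun v hv =>
    ((hasDerivAt_semicircleLogIntegral (abs_lt.mpr ⟨by linarith [hv.1], by linarith [hv.2]⟩)).sub
        ((hasDerivAt_pow 2 v).div_const 2)).congr_deriv (by ring)
  obtain ⟨c, hc, hslope⟩ := exists_hasDerivAt_eq_slope _ _ hu0
    (fun v hv => (hderiv v hv).continuousAt.continuousWithinAt)
    (fun v hv => hderiv v (Ioo_subset_Icc_self hv))
  have h0 : semicircleLogIntegral 0 = 0 := by simp [semicircleLogIntegral]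
  have hIc : I c = c := integral_two_mul_sub_div_mul_semicircleDensity hc.1 (hc.2.trans hu1)
  rw [hIc, sub_self, h0, eq_comm, div_eq_zero_iff] at hslope
  rcases hslope with h | h <;> linarith

theorem integral_log_sub_mul_semicircleDensity {u : ℝ} (hu0 : 0 < u) (hu1 : u < 1) :
    ∫ x in (-2 : ℝ)..2, log (u + 1 / u - x) * semicircleDensity x = u ^ 2 / 2 - log u := by
  have hu : |u| < 1 := abs_lt.mpr ⟨by linarith, hu1⟩
  have hlog : ∀ x ∈ uIcc (-2 : ℝ) 2, log (u + 1 / u - x) * semicircleDensity x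
      = log (1 + u ^ 2 - u * x) * semicircleDensity x - log u * semicircleDensity x := by
    intro x hx
    rw [uIcc_of_le (by norm_num)] at hx
    rw [show u + 1 / u - x = (1 + u ^ 2 - u * x) / u by field_simp; ring,
      log_div (one_add_sq_sub_mul_pos hu hx).ne' hu0.ne']
    ring
  rw [integral_congr hlog, integral_sub (intervalIntegrable_log_one_add_sq_sub_mul hu)
    ((continuous_semicircleDensity.const_mul _).intervalIntegrable _ _),
    intervalIntegral.integral_const_mul, integral_semicircleDensity, mul_one]
  exact congrArg (· - log u) (semicircleLogIntegral_eq hu0 hu1)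

theorem stmt_2 (β : ℝ) (hβ0 : 0 < β) (hβ : β < 1/2) :
    (∫ x in (-2:ℝ)..2, Real.log ((2*β + 1/(2*β)) - x) * ((1/(2*Real.pi)) * Real.sqrt (4 - x^2)))
        * (-(1/2))
      + β * (2*β + 1/(2*β)) - (1 + Real.log (2*β))/2 = β^2 := by
  have h := integral_log_sub_mul_semicircleDensity (u := 2 * β) (by linarith) (by linarith)
  unfold semicircleDensity at h
  rw [h]
  field_simp
  ring
end

section
/- The integral (1/(2π)) ∫_{-2}^{2} (x/(2 − x)) √(1 − (x/2)²) dx equals 1/2. -/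
/-!
The integrand is unbounded near `x = 2` but bounded below by `-1`, since `x / (2 - x) ≥ -1` and the
square root lies in `[0, 1]`; a derivative bounded below is integrable. On `(-2, 2)` the integrand
is the derivative of `arcsin (x / 2) - (2 + x / 2) * √(1 - (x / 2) ^ 2)`, continuous on `[-2, 2]`
with values `∓π / 2` at `∓2`, so the integral is `π`.
-/

open MeasureTheory Set

theorem intervalIntegrable_deriv_of_const_le {g g' : ℝ → ℝ} {a b c : ℝ} (hab : a ≤ b)
    (hcont : ContinuousOn g (Icc a b)) (hderiv : ∀ x ∈ Ioo a b, HasDerivAt g (g' x) x)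
    (hbdd : ∀ x ∈ Ioo a b, c ≤ g' x) : IntervalIntegrable g' volume a b := by
  have hshift : IntervalIntegrable (fun x => g' x - c) volume a b := by
    refine intervalIntegral.intervalIntegrable_deriv_of_nonneg (g := fun x => g x - c * x) ?_ ?_ ?_
    · rw [uIcc_of_le hab]
      exact hcont.sub (continuousOn_const.mul continuousOn_id)
    · intro x hx
      rw [min_eq_left hab, max_eq_right hab] at hx
      simpa using (hderiv x hx).fun_sub ((hasDerivAt_id x).const_mul c)
    · intro x hx
      rw [min_eq_left hab, max_eq_right hab] at hx
      exact sub_nonneg.2 (hbdd x hx)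
  simpa using hshift.add (intervalIntegrable_const : IntervalIntegrable (fun _ => c) volume a b)

noncomputable def antideriv (x : ℝ) : ℝ :=
  Real.arcsin (x / 2) - (2 + x / 2) * √(1 - (x / 2) ^ 2)

theorem continuous_antideriv : Continuous antideriv := by
  unfold antideriv
  fun_prop

theorem antideriv_two : antideriv 2 = Real.pi / 2 := by
  norm_num [antideriv, Real.arcsin_one]

theorem antideriv_neg_two : antideriv (-2) = -(Real.pi / 2) := by
  norm_num [antideriv, Real.arcsin_neg_one]

theorem hasDerivAt_antideriv {x : ℝ} (hx : x ∈ Ioo (-2 : ℝ) 2) :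
    HasDerivAt antideriv (x / (2 - x) * √(1 - (x / 2) ^ 2)) x := by
  obtain ⟨hlo, hhi⟩ := hx
  set s := √(1 - (x / 2) ^ 2) with hs
  have hrad : 0 < 1 - (x / 2) ^ 2 := by nlinarith
  have hs_sq : s ^ 2 = 1 - (x / 2) ^ 2 := Real.sq_sqrt hrad.le
  have hs_pos : 0 < s := Real.sqrt_pos.2 hrad
  have hhalf : HasDerivAt (fun y : ℝ => y / 2) (1 / 2) x := (hasDerivAt_id x).div_const 2
  have harcsin : HasDerivAt (fun y => Real.arcsin (y / 2)) (1 / s * (1 / 2)) x :=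
    (Real.hasDerivAt_arcsin (by linarith) (by linarith)).comp x hhalf
  have hsqrt : HasDerivAt (fun y => √(1 - (y / 2) ^ 2)) (-(x / 2) / (2 * s)) x := by
    convert ((hhalf.fun_pow 2).const_sub 1).sqrt hrad.ne' using 1
    ring
  refine (harcsin.fun_sub ((hhalf.const_add 2).fun_mul hsqrt)).congr_deriv ?_
  have h2x : 2 - x ≠ 0 := by linarith
  rw [← hs]
  field_simp
  linear_combination (-(8 + 4 * x)) * hs_sq

theorem neg_one_le_integrand {x : ℝ} (hx : x < 2) : -1 ≤ x / (2 - x) * √(1 - (x / 2) ^ 2) := by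
  have hfrac : -1 ≤ x / (2 - x) := by
    rw [le_div_iff₀ (by linarith)]
    linarith
  have hsqrt_le : √(1 - (x / 2) ^ 2) ≤ 1 :=
    Real.sqrt_le_one.2 (by nlinarith)
  nlinarith [Real.sqrt_nonneg (1 - (x / 2) ^ 2)]

theorem stmt_6 :
    (1/(2*Real.pi)) * ∫ x in (-2:ℝ)..2, (x/(2 - x)) * Real.sqrt (1 - (x/2)^2) = 1/2 := by
  have hcont := continuous_antideriv.continuousOn (s := Icc (-2) 2)
  have hderiv : ∀ x ∈ Ioo (-2 : ℝ) 2, HasDerivAt antideriv _ x := fun x hx =>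
    hasDerivAt_antideriv hx
  have hint := intervalIntegrable_deriv_of_const_le (by norm_num) hcont hderiv
    fun x hx => neg_one_le_integrand hx.2
  rw [intervalIntegral.integral_eq_sub_of_hasDerivAt_of_le (by norm_num) hcont hderiv hint,
    antideriv_two, antideriv_neg_two]
  field_simp
  ring
end
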